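/- Let n and m₁ be integers with 1 ≤ m₁ ≤ n/2. A symmetric matrix X ∈ {0,1}^{n×n} satisfies diag(X) = 1_n, ⟨J_n, X⟩ = m₁² + (n − m₁)², and 2X − J_n PSD if and only if there exists a matrix P ∈ {0,1}^{n×2} with P 1₂ = 1_n whose two column sums are m₁ and n − m₁ such that X = PPᵀ. Consequently, for any symmetric weight matrix L, the graph bisection problem with part sizes m₁ and n − m₁ is equivalent to minimizing (1/2)⟨L, X⟩ over the former set. -/

import Mathlib

open Matrix

/-- The `n × n` all-ones matrix `J_n`. -/
def allOnesM (n : ℕ) : Matrix (Fin n) (Fin n) ℝ := Matrix.of fun _ _ => 1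

/-- Feasibility for the BSDP formulation of the graph bisection problem with part sizes
`m₁` and `n − m₁`: `X ∈ {0,1}^{n×n}` symmetric, `diag X = 1_n`,
`⟨J_n, X⟩ = m₁² + (n − m₁)²`, and `2X − J_n` PSD. -/
def gbpBsdpFeasible (n m₁ : ℕ) (X : Matrix (Fin n) (Fin n) ℝ) : Prop :=
  X.IsSymm ∧ (∀ i j, X i j = 0 ∨ X i j = 1) ∧
  (X.diag = fun _ => 1) ∧
  ((allOnesM n)ᵀ * X).trace = (m₁ : ℝ) ^ 2 + ((n : ℝ) - (m₁ : ℝ)) ^ 2 ∧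
  ((2 : ℝ) • X - allOnesM n).PosSemidef

/-- Feasibility for the bisection-matrix formulation: `P ∈ {0,1}^{n×2}`, `P 1₂ = 1_n`,
and the two column sums of `P` are `m₁` and `n − m₁`. -/
def gbpPartitionFeasible (n m₁ : ℕ) (P : Matrix (Fin n) (Fin 2) ℝ) : Prop :=
  (∀ i j, P i j = 0 ∨ P i j = 1) ∧
  (P.mulVec (fun _ => 1) = fun _ => 1) ∧
  (∑ i, P i 0) = (m₁ : ℝ) ∧ (∑ i, P i 1) = (n : ℝ) - (m₁ : ℝ)

lemma outer_psd {n : ℕ} (s : Fin n → ℝ) :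
    (Matrix.of fun i j => s i * s j : Matrix (Fin n) (Fin n) ℝ).PosSemidef := by
  rw [Matrix.posSemidef_iff_dotProduct_mulVec]
  constructor
  · ext i j; simp [Matrix.conjTranspose_apply, mul_comm]
  · intro x
    have h : (star x) ⬝ᵥ ((Matrix.of fun i j => s i * s j) *ᵥ x) = (∑ i, s i * x i) ^ 2 := by
      simp only [dotProduct, mulVec, Matrix.of_apply, Pi.star_apply, star_trivial]
      calc ∑ i, x i * ∑ j, s i * s j * x j
          = ∑ i, (s i * x i) * ∑ j, s j * x j := by
            apply Finset.sum_congr rfl; intro i _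
            rw [Finset.mul_sum, Finset.mul_sum]
            apply Finset.sum_congr rfl; intro j _; ring
        _ = (∑ i, s i * x i) * ∑ j, s j * x j := by rw [Finset.sum_mul]
        _ = (∑ i, s i * x i) ^ 2 := by rw [sq]
    rw [h]; positivity

lemma quadform_three {n : ℕ} (M : Matrix (Fin n) (Fin n) ℝ) (i j k : Fin n)
    (a b c : ℝ) :
    (Pi.single i a + Pi.single j b + Pi.single k c) ⬝ᵥ
      (M *ᵥ (Pi.single i a + Pi.single j b + Pi.single k c)) =
    a * (M i i * a) + a * (M i j * b) + a * (M i k * c)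
      + b * (M j i * a) + b * (M j j * b) + b * (M j k * c)
      + c * (M k i * a) + c * (M k j * b) + c * (M k k * c) := by
  simp [mulVec_add, mulVec_single, dotProduct_add, add_dotProduct, single_dotProduct]
  ring

lemma easyDir {n m₁ : ℕ} (P : Matrix (Fin n) (Fin 2) ℝ)
    (hP : gbpPartitionFeasible n m₁ P) : gbpBsdpFeasible n m₁ (P * Pᵀ) := by
  obtain ⟨h01, hrow, hc0, hc1⟩ := hP
  have hrow' : ∀ i, P i 0 + P i 1 = 1 := by
    intro i
    have := congrFun hrow i
    simpa [mulVec, dotProduct, Fin.sum_univ_two] using this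
  have hdich : ∀ i, (P i 0 = 1 ∧ P i 1 = 0) ∨ (P i 0 = 0 ∧ P i 1 = 1) := by
    intro i
    have h := hrow' i
    rcases h01 i 0 with h0|h0 <;> rcases h01 i 1 with h1|h1
    · exfalso; rw [h0, h1] at h; norm_num at h
    · exact Or.inr ⟨h0, h1⟩
    · exact Or.inl ⟨h0, h1⟩
    · exfalso; rw [h0, h1] at h; norm_num at h
  have hX : ∀ i j, (P * Pᵀ) i j = P i 0 * P j 0 + P i 1 * P j 1 := by
    intro i j; simp [Matrix.mul_apply, Fin.sum_univ_two]
  refine ⟨?_, ?_, ?_, ?_, ?_⟩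
  · ext i j
    simp only [Matrix.transpose_apply, Matrix.IsSymm]
    rw [hX, hX]; ring
  · intro i j
    rw [hX]
    rcases hdich i with ⟨h0, h1⟩|⟨h0, h1⟩ <;> rcases hdich j with ⟨h2, h3⟩|⟨h2, h3⟩ <;>
      rw [h0, h1, h2, h3] <;> norm_num
  · funext i
    rw [Matrix.diag_apply, hX]
    rcases hdich i with ⟨h0, h1⟩|⟨h0, h1⟩ <;> rw [h0, h1] <;> norm_num
  · have ht : ((allOnesM n)ᵀ * (P * Pᵀ)).trace = ∑ i, ∑ j, (P * Pᵀ) j i := by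
      simp [Matrix.trace, Matrix.diag, Matrix.mul_apply, allOnesM]
    rw [ht]
    have : ∀ i : Fin n, ∑ j, (P * Pᵀ) j i
        = (∑ j, P j 0) * P i 0 + (∑ j, P j 1) * P i 1 := by
      intro i
      calc ∑ j, (P * Pᵀ) j i = ∑ j, (P j 0 * P i 0 + P j 1 * P i 1) :=
            Finset.sum_congr rfl (fun j _ => hX j i)
        _ = (∑ j, P j 0) * P i 0 + (∑ j, P j 1) * P i 1 := by
            rw [Finset.sum_add_distrib, Finset.sum_mul, Finset.sum_mul]
    rw [Finset.sum_congr rfl fun i _ => this i]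
    rw [Finset.sum_add_distrib, ← Finset.mul_sum, ← Finset.mul_sum, hc0, hc1]
    ring
  · have : (2 : ℝ) • (P * Pᵀ) - allOnesM n
        = Matrix.of fun i j => (P i 0 - P i 1) * (P j 0 - P j 1) := by
      ext i j
      simp only [Matrix.sub_apply, Matrix.smul_apply, allOnesM, Matrix.of_apply, smul_eq_mul]
      rw [hX]
      linear_combination (P i 0 + P i 1) * hrow' j + hrow' i
    rw [this]
    exact outer_psd _

lemma hardDir {n m₁ : ℕ} (hm : 1 ≤ m₁) (hmn : 2 * m₁ ≤ n)
    (X : Matrix (Fin n) (Fin n) ℝ) (hX : gbpBsdpFeasible n m₁ X) :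
    ∃ P : Matrix (Fin n) (Fin 2) ℝ, gbpPartitionFeasible n m₁ P ∧ X = P * Pᵀ := by
  obtain ⟨hsym, h01, hdiag, htr, hpsd⟩ := hX
  have hn : 0 < n := by omega
  set i0 : Fin n := ⟨0, hn⟩ with hi0def
  set Y : Matrix (Fin n) (Fin n) ℝ := (2 : ℝ) • X - allOnesM n with hYdef
  have hYapp : ∀ i j, Y i j = 2 * X i j - 1 := by
    intro i j; simp [hYdef, allOnesM]
  have hYsym : ∀ i j, Y j i = Y i j := by
    intro i j
    rw [hYapp, hYapp, hsym.apply i j]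
  have hY1 : ∀ i, Y i i = 1 := by
    intro i
    have := congrFun hdiag i
    rw [Matrix.diag_apply] at this
    rw [hYapp, this]; norm_num
  have hYpm : ∀ i j, Y i j = 1 ∨ Y i j = -1 := by
    intro i j
    rcases h01 i j with h|h <;> rw [hYapp, h] <;> norm_num
  have hq : ∀ v : Fin n → ℝ, 0 ≤ v ⬝ᵥ Y *ᵥ v := by
    intro v; have := hpsd.dotProduct_mulVec_nonneg v; simpa using this
  -- key transitivity
  have key : ∀ i j, Y i j = Y i i0 * Y j i0 := by
    intro i j
    by_cases hii : i = j
    · subst hii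
      rcases hYpm i i0 with h|h <;> rw [hY1 i, h] <;> norm_num
    by_cases hi0 : i = i0
    · subst hi0
      rw [hY1 i0, one_mul]
      exact (hYsym i0 j).symm
    by_cases hj0 : j = i0
    · subst hj0
      rw [hY1 i0, mul_one]
    · have h := hq (Pi.single i (Y i i0) + Pi.single j (Y j i0) + Pi.single i0 (-1))
      rw [quadform_three] at h
      rw [hY1 i, hY1 j, hY1 i0, hYsym i j, hYsym i i0, hYsym j i0] at h
      rcases hYpm i j with hc|hc <;> rcases hYpm i i0 with ha|ha <;>
        rcases hYpm j i0 with hb|hb <;> rw [hc, ha, hb] at h ⊢ <;> norm_num at h <;> norm_num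
  set s : Fin n → ℝ := fun i => Y i i0 with hsdef
  have hs : ∀ i, s i = 1 ∨ s i = -1 := fun i => hYpm i i0
  have hXform : ∀ i j, X i j = (1 + s i * s j) / 2 := by
    intro i j
    have h := key i j
    rw [hYapp] at h
    rw [hsdef]; linarith [h]
  have ht : ((allOnesM n)ᵀ * X).trace = ∑ i, ∑ j, X j i := by
    simp [Matrix.trace, Matrix.diag, Matrix.mul_apply, allOnesM]
  set t : ℝ := ∑ i, s i with htdef
  have hsum : ∑ i, ∑ j, X j i = ((n : ℝ) ^ 2 + t ^ 2) / 2 := by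
    have hinner : ∀ i : Fin n, ∑ j, X j i = ((n : ℝ) + t * s i) / 2 := by
      intro i
      rw [Finset.sum_congr rfl (fun j _ => hXform j i)]
      rw [← Finset.sum_div, Finset.sum_add_distrib, ← Finset.sum_mul]
      simp [htdef]
    rw [Finset.sum_congr rfl (fun i _ => hinner i)]
    rw [← Finset.sum_div, Finset.sum_add_distrib, ← Finset.mul_sum]
    simp [htdef]
    ring
  have htt : t ^ 2 = ((n : ℝ) - 2 * m₁) ^ 2 := by
    rw [ht, hsum] at htr
    nlinarith [htr]
  have ht' : t = (n : ℝ) - 2 * m₁ ∨ t = 2 * (m₁ : ℝ) - n := by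
    have h0 : (t - ((n : ℝ) - 2 * m₁)) * (t + ((n : ℝ) - 2 * m₁)) = 0 := by
      linear_combination htt
    rcases mul_eq_zero.1 h0 with h|h
    · left; linarith
    · right; linarith
  set ε : ℝ := if t = (n : ℝ) - 2 * m₁ then -1 else 1 with hεdef
  have hε : ε = 1 ∨ ε = -1 := by
    rw [hεdef]; split_ifs <;> simp
  have hε2 : ε * ε = 1 := by rcases hε with h|h <;> rw [h] <;> norm_num
  have hεt : ε * t = 2 * (m₁ : ℝ) - n := by
    rw [hεdef]
    by_cases hcase : t = (n : ℝ) - 2 * m₁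
    · rw [if_pos hcase, hcase]; ring
    · rw [if_neg hcase, (ht'.resolve_left hcase)]; ring
  set σ : Fin n → ℝ := fun i => ε * s i with hσdef
  have hσ : ∀ i, σ i = 1 ∨ σ i = -1 := by
    intro i
    rcases hε with h|h <;> rcases hs i with h'|h' <;> rw [hσdef] <;>
      simp only [] <;> rw [h, h'] <;> norm_num
  have hσt : ∑ i, σ i = 2 * (m₁ : ℝ) - n := by
    rw [hσdef]
    simp only []
    rw [← Finset.mul_sum, ← htdef, hεt]
  refine ⟨Matrix.of fun i (k : Fin 2) => if k = 0 then (1 + σ i) / 2 else (1 - σ i) / 2,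
    ⟨?_, ?_, ?_, ?_⟩, ?_⟩
  · intro i k
    fin_cases k <;> rcases hσ i with h|h <;> simp [h] <;> norm_num
  · funext i
    simp [mulVec, dotProduct, Fin.sum_univ_two]
    ring
  · have : ∀ i : Fin n, (Matrix.of fun i (k : Fin 2) =>
        if k = 0 then (1 + σ i) / 2 else (1 - σ i) / 2) i 0 = (1 + σ i) / 2 := by
      intro i; simp
    rw [Finset.sum_congr rfl (fun i _ => this i)]
    rw [← Finset.sum_div, Finset.sum_add_distrib, hσt]
    simp
  · have : ∀ i : Fin n, (Matrix.of fun i (k : Fin 2) =>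
        if k = 0 then (1 + σ i) / 2 else (1 - σ i) / 2) i 1 = (1 - σ i) / 2 := by
      intro i; simp
    rw [Finset.sum_congr rfl (fun i _ => this i)]
    rw [← Finset.sum_div, Finset.sum_sub_distrib, hσt]
    simp
    ring
  · ext i j
    rw [Matrix.mul_apply, Fin.sum_univ_two, hXform i j]
    simp [hσdef]
    linear_combination (-(s i * s j) / 2) * hε2

/-- A symmetric `{0,1}` matrix `X` satisfies `diag X = 1_n`, `⟨J_n, X⟩ = m₁² + (n−m₁)²` and
`2X − J_n ⪰ 0` iff `X = P Pᵀ` for some bisection matrix `P` with column sums `m₁` and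
`n − m₁`; consequently, for every symmetric weight matrix `L`, the graph bisection problem
with part sizes `m₁` and `n − m₁` is equivalent to minimizing `(1/2)⟨L, X⟩` over the former
set: the two programs attain the same objective values and have the same optimal value. -/
theorem stmt17 (n m₁ : ℕ) (hm : 1 ≤ m₁) (hmn : 2 * m₁ ≤ n) :
    (∀ X : Matrix (Fin n) (Fin n) ℝ,
      gbpBsdpFeasible n m₁ X ↔
        ∃ P : Matrix (Fin n) (Fin 2) ℝ, gbpPartitionFeasible n m₁ P ∧ X = P * Pᵀ) ∧
    (∀ L : Matrix (Fin n) (Fin n) ℝ, L.IsSymm →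
      ({v : ℝ | ∃ X : Matrix (Fin n) (Fin n) ℝ, gbpBsdpFeasible n m₁ X ∧
          v = (1 / 2 : ℝ) * (Lᵀ * X).trace} =
        {v : ℝ | ∃ P : Matrix (Fin n) (Fin 2) ℝ, gbpPartitionFeasible n m₁ P ∧
          v = (1 / 2 : ℝ) * (Lᵀ * (P * Pᵀ)).trace}) ∧
      sInf {v : ℝ | ∃ X : Matrix (Fin n) (Fin n) ℝ, gbpBsdpFeasible n m₁ X ∧
          v = (1 / 2 : ℝ) * (Lᵀ * X).trace} =
        sInf {v : ℝ | ∃ P : Matrix (Fin n) (Fin 2) ℝ, gbpPartitionFeasible n m₁ P ∧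
          v = (1 / 2 : ℝ) * (Lᵀ * (P * Pᵀ)).trace}) := by
  have hiff : ∀ X : Matrix (Fin n) (Fin n) ℝ,
      gbpBsdpFeasible n m₁ X ↔
        ∃ P : Matrix (Fin n) (Fin 2) ℝ, gbpPartitionFeasible n m₁ P ∧ X = P * Pᵀ := by
    intro X
    constructor
    · exact hardDir hm hmn X
    · rintro ⟨P, hP, rfl⟩
      exact easyDir P hP
  refine ⟨hiff, ?_⟩
  intro L hL
  have hset : {v : ℝ | ∃ X : Matrix (Fin n) (Fin n) ℝ, gbpBsdpFeasible n m₁ X ∧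
        v = (1 / 2 : ℝ) * (Lᵀ * X).trace} =
      {v : ℝ | ∃ P : Matrix (Fin n) (Fin 2) ℝ, gbpPartitionFeasible n m₁ P ∧
        v = (1 / 2 : ℝ) * (Lᵀ * (P * Pᵀ)).trace} := by
    ext v
    simp only [Set.mem_setOf_eq]
    constructor
    · rintro ⟨X, hX, rfl⟩
      obtain ⟨P, hP, rfl⟩ := (hiff X).1 hX
      exact ⟨P, hP, rfl⟩
    · rintro ⟨P, hP, rfl⟩
      exact ⟨P * Pᵀ, (hiff _).2 ⟨P, hP, rfl⟩, rfl⟩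
  exact ⟨hset, by rw [hset]⟩
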